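/- arXiv:1610.04840 — 4 statements merged into one kernel-verified Lean document; each statement's English description precedes it below -/
import Mathlib

section
/- For every real number ν > -1 and every z > 0, the ratio u = I_{ν+1}(z)/I_ν(z) of modified Bessel functions of the first kind satisfies u² + (2ν/z)·u − 1 < 0. -/
open Real Filter Set

/-- Modified Bessel function of the first kind of order `ν`, defined by its power series
(valid for `z > 0`). -/
noncomputable def besselI (ν : ℝ) (z : ℝ) : ℝ :=
  ∑' m : ℕ, (z / 2) ^ (2 * (m : ℝ) + ν) / ((m.factorial : ℝ) * Real.Gamma ((m : ℝ) + ν + 1))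

/-- Bessel function of the first kind of order `ν`, defined by its power series
(valid for `z > 0`). -/
noncomputable def besselJ (ν : ℝ) (z : ℝ) : ℝ :=
  ∑' m : ℕ, (-1 : ℝ) ^ m * (z / 2) ^ (2 * (m : ℝ) + ν) /
    ((m.factorial : ℝ) * Real.Gamma ((m : ℝ) + ν + 1))

/-!
Via the recurrence `I_{ν-1} = I_{ν+1} + (2ν/z) I_ν`, the claim is the Turán-type inequality
`I_{ν-1} I_{ν+1} < I_ν²`. Multiplying out the power series, the `n`-th coefficient of
`I_ν² - I_{ν-1} I_{ν+1}` is `∑_{k+l=n} a_k a_l (l+1-k)/(l+ν+1)`, where `a_k` are the terms of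
`I_ν`. Its `k = 0` term is positive, and since `a_{j+1} (j+1)(j+ν+1) / a_j` does not depend on `j`,
the terms at `(i+1, l)` and `(l+1, i)` add up to `a_{i+1} a_l (l-i)² / ((l+1)(l+ν+1)) ≥ 0`.
-/

open Finset

noncomputable def turanCoeff (a : ℕ → ℝ) (ν : ℝ) (p : ℕ × ℕ) : ℝ :=
  a p.1 * a p.2 * (((p.2 : ℝ) + 1 - p.1) / ((p.2 : ℝ) + ν + 1))

section TuranCoeff

variable {a : ℕ → ℝ} {ν P : ℝ}

theorem turanCoeff_add_turanCoeff_nonneg (ha : ∀ j, 0 < a j)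
    (hrec : ∀ j : ℕ, a (j + 1) * (((j : ℝ) + 1) * ((j : ℝ) + ν + 1)) = P * a j)
    (hν : -1 < ν) (i l : ℕ) :
    0 ≤ turanCoeff a ν (i + 1, l) + turanCoeff a ν (l + 1, i) := by
  have hi : 0 < (i : ℝ) + ν + 1 := by linarith [i.cast_nonneg (α := ℝ)]
  have hl : 0 < (l : ℝ) + ν + 1 := by linarith [l.cast_nonneg (α := ℝ)]
  have hcross : a (l + 1) * a i * (((l : ℝ) + 1) * ((l : ℝ) + ν + 1)) =
      a (i + 1) * a l * (((i : ℝ) + 1) * ((i : ℝ) + ν + 1)) := by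
    linear_combination a i * hrec l - a l * hrec i
  have hsq : turanCoeff a ν (i + 1, l) + turanCoeff a ν (l + 1, i) =
      a (i + 1) * a l * ((l : ℝ) - i) ^ 2 / (((l : ℝ) + 1) * ((l : ℝ) + ν + 1)) := by
    simp only [turanCoeff]
    push_cast
    field_simp
    linear_combination (i - l) * hcross
  rw [hsq]
  have := ha (i + 1); have := ha l
  positivity

theorem sum_antidiagonal_turanCoeff_pos (ha : ∀ j, 0 < a j)
    (hrec : ∀ j : ℕ, a (j + 1) * (((j : ℝ) + 1) * ((j : ℝ) + ν + 1)) = P * a j)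
    (hν : -1 < ν) (n : ℕ) :
    0 < ∑ p ∈ antidiagonal n, turanCoeff a ν p := by
  have hzero (l : ℕ) : 0 < turanCoeff a ν (0, l) := by
    have : 0 < (l : ℝ) + ν + 1 := by linarith [l.cast_nonneg (α := ℝ)]
    have := ha 0; have := ha l
    simp only [turanCoeff, Nat.cast_zero, sub_zero]
    positivity
  cases n with
  | zero => simpa using hzero 0
  | succ n =>
    have hpairs : 0 ≤ ∑ p ∈ antidiagonal n, turanCoeff a ν (p.1 + 1, p.2) := by
      have hsym : 2 * ∑ p ∈ antidiagonal n, turanCoeff a ν (p.1 + 1, p.2) =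
          ∑ p ∈ antidiagonal n,
            (turanCoeff a ν (p.1 + 1, p.2) + turanCoeff a ν (p.2 + 1, p.1)) := by
        rw [sum_add_distrib, two_mul]
        congr 1
        exact (Nat.sum_antidiagonal_swap (f := fun p => turanCoeff a ν (p.1 + 1, p.2))).symm
      have := sum_nonneg fun p (_ : p ∈ antidiagonal n) =>
        turanCoeff_add_turanCoeff_nonneg ha hrec hν p.1 p.2
      linarith
    rw [Nat.sum_antidiagonal_succ]
    linarith [hzero (n + 1)]

end TuranCoeff

-- Also true at the poles, where `Gamma` takes the junk value `0`.
theorem Real.inv_Gamma_eq_self_mul_inv_Gamma_add_one (s : ℝ) :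
    (Gamma s)⁻¹ = s * (Gamma (s + 1))⁻¹ := by
  rcases ne_or_eq s 0 with h | rfl
  · rw [Gamma_add_one h, mul_inv, mul_inv_cancel_left₀ h]
  · rw [zero_add, Gamma_zero, inv_zero, zero_mul]

noncomputable def besselITerm (μ z : ℝ) (m : ℕ) : ℝ :=
  (z / 2) ^ (2 * (m : ℝ) + μ) / ((m.factorial : ℝ) * Gamma ((m : ℝ) + μ + 1))

theorem besselI_eq_tsum (μ z : ℝ) : besselI μ z = ∑' m, besselITerm μ z m := rfl

section Term

variable {z : ℝ}

theorem besselITerm_pos {μ : ℝ} (hμ : -1 < μ) (hz : 0 < z) (m : ℕ) : 0 < besselITerm μ z m := by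
  have : 0 < Gamma ((m : ℝ) + μ + 1) := Gamma_pos_of_pos (by linarith [m.cast_nonneg (α := ℝ)])
  unfold besselITerm
  positivity

theorem besselITerm_mul_half (μ : ℝ) (hz : 0 < z) (m : ℕ) :
    besselITerm μ z m * (z / 2) = besselITerm (μ + 1) z m * ((m : ℝ) + μ + 1) := by
  have hpow : (z / 2) ^ (2 * (m : ℝ) + (μ + 1)) = (z / 2) ^ (2 * (m : ℝ) + μ) * (z / 2) := by
    rw [← rpow_add_one (by positivity)]; ring_nf
  have harg : (m : ℝ) + (μ + 1) + 1 = (m + μ + 1) + 1 := by ring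
  rw [besselITerm, besselITerm, hpow, harg]
  simp only [div_eq_mul_inv, mul_inv, inv_Gamma_eq_self_mul_inv_Gamma_add_one ((m : ℝ) + μ + 1)]
  ring

theorem besselITerm_succ_mul (μ : ℝ) (hz : 0 < z) (m : ℕ) :
    besselITerm μ z (m + 1) * ((m : ℝ) + 1) = besselITerm (μ + 1) z m * (z / 2) := by
  have hpow : (z / 2) ^ (2 * ((m : ℝ) + 1) + μ) = (z / 2) ^ (2 * (m : ℝ) + (μ + 1)) * (z / 2) := by
    rw [← rpow_add_one (by positivity)]; ring_nf
  simp only [besselITerm, Nat.factorial_succ, Nat.cast_mul, Nat.cast_succ, hpow]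
  rw [show (m : ℝ) + 1 + μ + 1 = m + (μ + 1) + 1 by ring]
  field_simp

theorem besselITerm_succ_mul_succ_mul (μ : ℝ) (hz : 0 < z) (m : ℕ) :
    besselITerm μ z (m + 1) * (((m : ℝ) + 1) * ((m : ℝ) + μ + 1)) =
      (z / 2) ^ 2 * besselITerm μ z m := by
  rw [← mul_assoc, besselITerm_succ_mul μ hz, mul_right_comm, ← besselITerm_mul_half μ hz]
  ring

theorem summable_besselITerm (μ : ℝ) (hz : 0 < z) : Summable (besselITerm μ z) := by
  obtain ⟨N, hN⟩ := exists_nat_gt (max (-μ) (2 * (z / 2) ^ 2))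
  refine summable_of_ratio_norm_eventually_le (r := 1 / 2) (by norm_num) ?_
  filter_upwards [eventually_ge_atTop N] with m hm
  have hmN : (N : ℝ) ≤ m := Nat.cast_le.mpr hm
  have hμ : 0 < (m : ℝ) + μ := by linarith [le_max_left (-μ) (2 * (z / 2) ^ 2)]
  have hP : 2 * (z / 2) ^ 2 < (m : ℝ) + 1 := by linarith [le_max_right (-μ) (2 * (z / 2) ^ 2)]
  have hD : 0 < ((m : ℝ) + 1) * ((m : ℝ) + μ + 1) := by positivity
  have hratio : besselITerm μ z (m + 1) =
      (z / 2) ^ 2 / (((m : ℝ) + 1) * ((m : ℝ) + μ + 1)) * besselITerm μ z m := by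
    rw [div_mul_eq_mul_div, eq_div_iff hD.ne', besselITerm_succ_mul_succ_mul μ hz]
  rw [hratio, norm_mul, Real.norm_of_nonneg (by positivity)]
  have hq : (z / 2) ^ 2 / (((m : ℝ) + 1) * ((m : ℝ) + μ + 1)) ≤ 1 / 2 := by
    rw [div_le_iff₀ hD]
    nlinarith
  exact mul_le_mul_of_nonneg_right hq (norm_nonneg _)

theorem besselI_pos {μ : ℝ} (hμ : -1 < μ) (hz : 0 < z) : 0 < besselI μ z :=
  (summable_besselITerm μ hz).tsum_pos (fun m => (besselITerm_pos hμ hz m).le) 0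
    (besselITerm_pos hμ hz 0)

theorem besselITerm_mul_sub_mul {ν : ℝ} (hν : -1 < ν) (hz : 0 < z) (k l : ℕ) :
    besselITerm ν z k * besselITerm ν z l - besselITerm (ν - 1) z k * besselITerm (ν + 1) z l =
      turanCoeff (besselITerm ν z) ν (k, l) := by
  have hl : 0 < (l : ℝ) + ν + 1 := by linarith [l.cast_nonneg (α := ℝ)]
  have hdown := besselITerm_mul_half (ν - 1) hz k
  have hup := besselITerm_mul_half ν hz l
  rw [sub_add_cancel] at hdown
  have hprod : besselITerm (ν - 1) z k * besselITerm (ν + 1) z l * ((l : ℝ) + ν + 1) =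
      besselITerm ν z k * besselITerm ν z l * ((k : ℝ) + ν) := by
    refine mul_right_cancel₀ (by positivity : z / 2 ≠ 0) ?_
    linear_combination besselITerm (ν + 1) z l * ((l : ℝ) + ν + 1) * hdown -
      besselITerm ν z k * ((k : ℝ) + ν) * hup
  rw [turanCoeff, mul_div_assoc', eq_div_iff hl.ne']
  linear_combination -hprod

theorem besselI_sub_one_mul_besselI_add_one_lt_sq {ν : ℝ} (hν : -1 < ν) (hz : 0 < z) :
    besselI (ν - 1) z * besselI (ν + 1) z < besselI ν z ^ 2 := by
  have hnorm (μ : ℝ) : Summable (‖besselITerm μ z ·‖) :=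
    summable_norm_iff.mpr (summable_besselITerm μ hz)
  have hcoeff (n : ℕ) :
      ∑ p ∈ antidiagonal n, besselITerm (ν - 1) z p.1 * besselITerm (ν + 1) z p.2 <
        ∑ p ∈ antidiagonal n, besselITerm ν z p.1 * besselITerm ν z p.2 := by
    rw [← sub_pos, ← sum_sub_distrib]
    simp only [besselITerm_mul_sub_mul hν hz]
    exact sum_antidiagonal_turanCoeff_pos (besselITerm_pos hν hz)
      (besselITerm_succ_mul_succ_mul ν hz) hν n
  rw [besselI_eq_tsum, besselI_eq_tsum, besselI_eq_tsum, sq,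
    tsum_mul_tsum_eq_tsum_sum_antidiagonal_of_summable_norm (hnorm _) (hnorm _),
    tsum_mul_tsum_eq_tsum_sum_antidiagonal_of_summable_norm (hnorm _) (hnorm _)]
  exact Summable.tsum_lt_tsum (fun n => (hcoeff n).le) (hcoeff 0)
    (summable_norm_sum_mul_antidiagonal_of_summable_norm (hnorm _) (hnorm _)).of_norm
    (summable_norm_sum_mul_antidiagonal_of_summable_norm (hnorm _) (hnorm _)).of_norm

theorem besselI_sub_one (ν : ℝ) (hz : 0 < z) :
    besselI (ν - 1) z = besselI (ν + 1) z + 2 * ν / z * besselI ν z := by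
  have hs (μ : ℝ) := summable_besselITerm μ hz
  have hz2 : z / 2 ≠ 0 := by positivity
  have hzero : besselITerm (ν - 1) z 0 = 2 * ν / z * besselITerm ν z 0 := by
    have h := besselITerm_mul_half (ν - 1) hz 0
    rw [sub_add_cancel] at h
    refine mul_right_cancel₀ hz2 ?_
    rw [h]
    field_simp
    push_cast
    ring
  have hsucc (m : ℕ) : besselITerm (ν - 1) z (m + 1) =
      besselITerm (ν + 1) z m + 2 * ν / z * besselITerm ν z (m + 1) := by
    have h := besselITerm_mul_half (ν - 1) hz (m + 1)
    rw [sub_add_cancel] at h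
    refine mul_right_cancel₀ hz2 ?_
    rw [add_mul, ← besselITerm_succ_mul ν hz, h]
    field_simp
    push_cast
    ring
  rw [besselI_eq_tsum, besselI_eq_tsum, besselI_eq_tsum, (hs (ν - 1)).tsum_eq_zero_add,
    (hs ν).tsum_eq_zero_add, tsum_congr hsucc,
    (hs (ν + 1)).tsum_add (((summable_nat_add_iff 1).mpr (hs ν)).mul_left _), tsum_mul_left,
    hzero]
  ring

end Term

/-- For every `ν > -1` and `z > 0`, the ratio `u = I_{ν+1}(z)/I_ν(z)` satisfies
`u² + (2ν/z)·u − 1 < 0`. -/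
theorem stmt0 (ν z : ℝ) (hν : -1 < ν) (hz : 0 < z) :
    (besselI (ν + 1) z / besselI ν z) ^ 2
      + (2 * ν / z) * (besselI (ν + 1) z / besselI ν z) - 1 < 0 := by
  have hpos : 0 < besselI ν z := besselI_pos hν hz
  have hturan := besselI_sub_one_mul_besselI_add_one_lt_sq hν hz
  rw [besselI_sub_one ν hz] at hturan
  have hquad : (besselI (ν + 1) z / besselI ν z) ^ 2
      + (2 * ν / z) * (besselI (ν + 1) z / besselI ν z) - 1 =
      ((besselI (ν + 1) z + 2 * ν / z * besselI ν z) * besselI (ν + 1) z - besselI ν z ^ 2) /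
        besselI ν z ^ 2 := by
    field_simp
  rw [hquad]
  exact div_neg_of_neg_of_pos (by linarith) (by positivity)
end

section
/- For every real number ν > -1 and every z > 0, the Turán-type inequality I_{ν−1}(z)·I_{ν+1}(z) < I_ν(z)² holds. -/
/-!
Write `I_ν(z) = (z/2)^ν F_ν(z²/4)` with the entire series `F_ν(t) = ∑ₖ cₖ(ν) tᵏ`,
`cₖ(ν) = 1 / (k! Γ(k + ν + 1))`. By the Cauchy product it suffices to compare the coefficients
of `F_ν²` and `F_{ν-1} F_{ν+1}`. The recurrence `1/Γ(x) = x/Γ(x + 1)` turns the coefficient of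
`tⁿ` in the difference into `∑_{i+j=n+1} j (j - i) cᵢ(ν) cⱼ(ν)`, and averaging with the
reflection `i ↔ j` shows that this equals `½ ∑_{i+j=n+1} (j - i)² cᵢ(ν) cⱼ(ν) > 0`.
-/

open Real Filter Set

namespace Real

-- Also true at the poles, where `Gamma` takes the junk value `0`.
theorem Gamma_inv_eq_mul_Gamma_add_one_inv (x : ℝ) : (Gamma x)⁻¹ = x * (Gamma (x + 1))⁻¹ := by
  rcases eq_or_ne x 0 with rfl | hx
  · simp [Gamma_zero]
  · rw [Gamma_add_one hx, mul_inv, ← mul_assoc, mul_inv_cancel₀ hx, one_mul]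

theorem one_le_Gamma {x : ℝ} (hx : 2 ≤ x) : 1 ≤ Gamma x :=
  Gamma_two ▸ Gamma_strictMonoOn_Ici.monotoneOn (mem_Ici.2 le_rfl : (2 : ℝ) ∈ Ici 2) hx hx

end Real

open Finset
open scoped Nat

theorem Finset.Nat.two_mul_sum_antidiagonal_mul_sub {R : Type*} [CommRing R] (g : ℕ → R)
    (n : ℕ) :
    2 * ∑ p ∈ antidiagonal n, (p.2 : R) * (p.2 - p.1) * (g p.1 * g p.2) =
      ∑ p ∈ antidiagonal n, ((p.2 : R) - p.1) ^ 2 * (g p.1 * g p.2) := by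
  rw [two_mul]
  nth_rewrite 2 [← Finset.Nat.sum_antidiagonal_swap]
  rw [← sum_add_distrib]
  refine sum_congr rfl fun p _ => ?_
  simp only [Prod.fst_swap, Prod.snd_swap]
  ring

theorem Finset.Nat.sum_antidiagonal_mul_pow_mul_mul_pow {R : Type*} [CommSemiring R]
    (f g : ℕ → R) (t : R) (n : ℕ) :
    ∑ p ∈ antidiagonal n, f p.1 * t ^ p.1 * (g p.2 * t ^ p.2) =
      t ^ n * ∑ p ∈ antidiagonal n, f p.1 * g p.2 := by
  rw [mul_sum]
  refine sum_congr rfl fun p hp => ?_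
  rw [← mem_antidiagonal.mp hp, pow_add]
  ring

theorem tsum_mul_tsum_lt_tsum_mul_tsum_of_sum_antidiagonal {f₁ g₁ f₂ g₂ : ℕ → ℝ}
    (hf₁ : Summable fun n => ‖f₁ n‖) (hg₁ : Summable fun n => ‖g₁ n‖)
    (hf₂ : Summable fun n => ‖f₂ n‖) (hg₂ : Summable fun n => ‖g₂ n‖)
    (hle : ∀ n, ∑ p ∈ antidiagonal n, f₁ p.1 * g₁ p.2 ≤ ∑ p ∈ antidiagonal n, f₂ p.1 * g₂ p.2)
    (n : ℕ)
    (hlt : ∑ p ∈ antidiagonal n, f₁ p.1 * g₁ p.2 < ∑ p ∈ antidiagonal n, f₂ p.1 * g₂ p.2) :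
    (∑' n, f₁ n) * ∑' n, g₁ n < (∑' n, f₂ n) * ∑' n, g₂ n := by
  rw [tsum_mul_tsum_eq_tsum_sum_antidiagonal_of_summable_norm hf₁ hg₁,
    tsum_mul_tsum_eq_tsum_sum_antidiagonal_of_summable_norm hf₂ hg₂]
  exact Summable.tsum_lt_tsum hle hlt
    (summable_norm_sum_mul_antidiagonal_of_summable_norm hf₁ hg₁).of_norm
    (summable_norm_sum_mul_antidiagonal_of_summable_norm hf₂ hg₂).of_norm

noncomputable def besselICoeff (ν : ℝ) (k : ℕ) : ℝ := ((k ! : ℝ) * Gamma (k + ν + 1))⁻¹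

noncomputable def besselISeries (ν t : ℝ) : ℝ := ∑' k, besselICoeff ν k * t ^ k

theorem besselICoeff_pos {ν : ℝ} (hν : -1 < ν) (k : ℕ) : 0 < besselICoeff ν k := by
  have hk : 0 < (k : ℝ) + ν + 1 := by linarith [k.cast_nonneg (α := ℝ)]
  have := Gamma_pos_of_pos hk
  unfold besselICoeff
  positivity

theorem besselICoeff_sub_one (ν : ℝ) (k : ℕ) :
    besselICoeff (ν - 1) k = (k + ν) * besselICoeff ν k := by
  rw [besselICoeff, besselICoeff, mul_inv, mul_inv, add_sub_assoc', sub_add_cancel,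
    Gamma_inv_eq_mul_Gamma_add_one_inv]
  ring

theorem besselICoeff_add_one (ν : ℝ) (k : ℕ) :
    besselICoeff (ν + 1) k = (k + 1) * besselICoeff ν (k + 1) := by
  rw [besselICoeff, besselICoeff, Nat.factorial_succ,
    show ((k + 1 : ℕ) : ℝ) + ν + 1 = k + (ν + 1) + 1 by push_cast; ring]
  push_cast
  field_simp

theorem besselICoeff_eq_mul_besselICoeff_succ (ν : ℝ) (k : ℕ) :
    besselICoeff ν k = (k + 1) * (k + ν + 1) * besselICoeff ν (k + 1) := by
  rw [mul_right_comm, ← besselICoeff_add_one, besselICoeff, besselICoeff, mul_inv, mul_inv,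
    Gamma_inv_eq_mul_Gamma_add_one_inv ((k : ℝ) + ν + 1)]
  ring_nf

theorem summable_norm_besselICoeff_mul_pow (ν t : ℝ) :
    Summable fun k => ‖besselICoeff ν k * t ^ k‖ := by
  refine .of_norm_bounded_eventually (Real.summable_pow_div_factorial |t|) ?_
  obtain ⟨N, hN⟩ := exists_nat_ge (1 - ν)
  filter_upwards [Nat.cofinite_eq_atTop ▸ eventually_ge_atTop N] with k hk
  have hΓ : 1 ≤ Gamma (k + ν + 1) := one_le_Gamma (by
    have : (N : ℝ) ≤ k := by exact_mod_cast hk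
    linarith)
  have hk! : (0 : ℝ) < k ! := by positivity
  rw [norm_norm, norm_mul, norm_pow, norm_eq_abs, besselICoeff, abs_inv, abs_mul,
    abs_of_pos hk!, abs_of_pos (by linarith), mul_comm, ← div_eq_mul_inv]
  exact div_le_div_of_nonneg_left (by positivity) hk! (le_mul_of_one_le_right hk!.le hΓ)

theorem sum_antidiagonal_besselICoeff_sub (ν : ℝ) (n : ℕ) :
    ∑ p ∈ antidiagonal n,
        (besselICoeff ν p.1 * besselICoeff ν p.2 -
          besselICoeff (ν - 1) p.1 * besselICoeff (ν + 1) p.2) =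
      ∑ p ∈ antidiagonal (n + 1),
        (p.2 : ℝ) * (p.2 - p.1) * (besselICoeff ν p.1 * besselICoeff ν p.2) := by
  rw [Finset.Nat.sum_antidiagonal_succ', Nat.cast_zero, zero_mul, zero_mul, zero_add]
  refine sum_congr rfl fun p _ => ?_
  rw [besselICoeff_eq_mul_besselICoeff_succ ν p.2, besselICoeff_sub_one, besselICoeff_add_one]
  push_cast
  ring

theorem sum_antidiagonal_besselICoeff_sub_one_mul_add_one_lt {ν : ℝ} (hν : -1 < ν) (n : ℕ) :
    ∑ p ∈ antidiagonal n, besselICoeff (ν - 1) p.1 * besselICoeff (ν + 1) p.2 <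
      ∑ p ∈ antidiagonal n, besselICoeff ν p.1 * besselICoeff ν p.2 := by
  rw [← sub_pos, ← sum_sub_distrib, sum_antidiagonal_besselICoeff_sub,
    ← mul_pos_iff_of_pos_left two_pos, Finset.Nat.two_mul_sum_antidiagonal_mul_sub]
  have hc := besselICoeff_pos hν
  refine sum_pos' (fun p _ => by have := hc p.1; have := hc p.2; positivity)
    ⟨(0, n + 1), by simp, ?_⟩
  have := hc 0; have := hc (n + 1)
  simp only [Nat.cast_zero, sub_zero]
  positivity

theorem besselISeries_sub_one_mul_besselISeries_add_one_lt {ν t : ℝ} (hν : -1 < ν)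
    (ht : 0 < t) :
    besselISeries (ν - 1) t * besselISeries (ν + 1) t < besselISeries ν t ^ 2 := by
  have hs μ := summable_norm_besselICoeff_mul_pow μ t
  have hlt n := mul_lt_mul_of_pos_left
    (sum_antidiagonal_besselICoeff_sub_one_mul_add_one_lt hν n) (pow_pos ht n)
  simp only [← Finset.Nat.sum_antidiagonal_mul_pow_mul_mul_pow] at hlt
  rw [sq]
  exact tsum_mul_tsum_lt_tsum_mul_tsum_of_sum_antidiagonal (hs _) (hs _) (hs _) (hs _)
    (fun n => (hlt n).le) 0 (hlt 0)

theorem besselI_eq_rpow_mul_besselISeries (ν : ℝ) {z : ℝ} (hz : 0 < z) :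
    besselI ν z = (z / 2) ^ ν * besselISeries ν ((z / 2) ^ 2) := by
  rw [besselI, besselISeries, ← tsum_mul_left]
  refine tsum_congr fun k => ?_
  rw [add_comm, rpow_add (by positivity), ← pow_mul, mul_comm 2 k, ← Nat.cast_ofNat,
    ← Nat.cast_mul, rpow_natCast, besselICoeff, div_eq_mul_inv]
  ring

/-- Turán-type inequality: for every `ν > -1` and `z > 0`,
`I_{ν−1}(z)·I_{ν+1}(z) < I_ν(z)²`. -/
theorem stmt2 (ν z : ℝ) (hν : -1 < ν) (hz : 0 < z) :
    besselI (ν - 1) z * besselI (ν + 1) z < besselI ν z ^ 2 := by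
  have hz2 : 0 < z / 2 := by positivity
  have hpow : (z / 2) ^ (ν - 1) * (z / 2) ^ (ν + 1) = ((z / 2) ^ ν) ^ 2 := by
    rw [← rpow_add hz2, ← rpow_two, ← rpow_mul hz2.le]
    ring_nf
  simp only [besselI_eq_rpow_mul_besselISeries _ hz]
  calc _ = ((z / 2) ^ ν) ^ 2 *
        (besselISeries (ν - 1) ((z / 2) ^ 2) * besselISeries (ν + 1) ((z / 2) ^ 2)) := by
        rw [← hpow]; ring
    _ < ((z / 2) ^ ν) ^ 2 * besselISeries ν ((z / 2) ^ 2) ^ 2 :=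
        mul_lt_mul_of_pos_left (besselISeries_sub_one_mul_besselISeries_add_one_lt hν
          (by positivity)) (by positivity)
    _ = _ := by ring
end

section
/- For every integer k ≥ 0, the function G_k(z) := z·I_k'(z)/I_k(z) has positive derivative on (0, +∞); in particular G_k is strictly increasing on (0, +∞). -/
open Real Filter Set

open Topology
open scoped Nat

/-! With `θ = z d/dz` and `I_k(z) = ∑ₘ (z/2)^(2m+k) / (m! (m+k)!)`, termwise differentiation gives
`θ I_k = z I_k'`, and for the coefficients `cₘ` of `z^(2m+k)` the recursion
`(2m+k)² cₘ = k² cₘ + cₘ₋₁` is the Bessel equation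
`θ² I_k = (z² + k²) I_k`. Hence `G_k = θ I_k / I_k` satisfies `z G_k' = W / I_k²` with
`W = (z² + k²) I_k² - (θ I_k)²`, and the Bessel equation also gives `W' = 2 z I_k²` and `W(0) = 0`.
So `W > 0` on `(0, ∞)`, whence `G_k' > 0`. -/

noncomputable section

def powSum (a : ℕ → ℝ) (d : ℕ → ℕ) (x : ℝ) : ℝ := ∑' m, a m * x ^ d m

def eulerCoeff (a : ℕ → ℝ) (d : ℕ → ℕ) (m : ℕ) : ℝ := a m * d m

def PowSumEntire (a : ℕ → ℝ) (d : ℕ → ℕ) : Prop := ∀ x : ℝ, Summable fun m => ‖a m * x ^ d m‖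

namespace PowSumEntire

variable {a : ℕ → ℝ} {d : ℕ → ℕ}

theorem summable (h : PowSumEntire a d) (x : ℝ) : Summable fun m => a m * x ^ d m :=
  (h x).of_norm

theorem euler (h : PowSumEntire a d) : PowSumEntire (eulerCoeff a d) d := fun x =>
  (h (2 * x)).of_nonneg_of_le (fun _ => norm_nonneg _) fun m => by
    have hd : (d m : ℝ) ≤ 2 ^ d m := by exact_mod_cast (d m).lt_two_pow_self.le
    simp only [eulerCoeff, norm_mul, norm_pow, Real.norm_natCast, Real.norm_two, mul_pow]
    rw [mul_assoc]
    gcongr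

theorem euler_pred (h : PowSumEntire a d) :
    PowSumEntire (eulerCoeff a d) (fun m => d m - 1) := fun x =>
  (h.euler (|x| + 1)).of_nonneg_of_le (fun _ => norm_nonneg _) fun m => by
    simp only [norm_mul, norm_pow, Real.norm_eq_abs, abs_of_pos (by positivity : 0 < |x| + 1)]
    gcongr
    calc |x| ^ (d m - 1) ≤ (|x| + 1) ^ (d m - 1) := by gcongr; linarith
      _ ≤ (|x| + 1) ^ d m := pow_le_pow_right₀ (by linarith [abs_nonneg x]) (Nat.sub_le _ _)

theorem hasDerivAt (h : PowSumEntire a d) (x : ℝ) :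
    HasDerivAt (powSum a d) (powSum (eulerCoeff a d) (fun m => d m - 1) x) x := by
  set r := |x| + 1
  have hx : x ∈ Metric.ball (0 : ℝ) r := by simp [r]
  have hderiv : ∀ m y, HasDerivAt (fun y => a m * y ^ d m)
      (eulerCoeff a d m * y ^ (d m - 1)) y := fun m y =>
    ((hasDerivAt_pow (d m) y).const_mul (a m)).congr_deriv (by rw [eulerCoeff]; ring)
  have hbound : ∀ m, ∀ y ∈ Metric.ball (0 : ℝ) r,
      ‖eulerCoeff a d m * y ^ (d m - 1)‖ ≤ ‖eulerCoeff a d m * r ^ (d m - 1)‖ := by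
    intro m y hy
    rw [mem_ball_zero_iff] at hy
    rw [norm_mul, norm_mul, norm_pow, norm_pow]
    gcongr
    exact hy.le.trans (le_abs_self r)
  exact hasDerivAt_tsum_of_isPreconnected (h.euler_pred r) Metric.isOpen_ball
    (convex_ball _ _).isPreconnected (fun m y _ => hderiv m y) hbound hx (h.summable x) hx

theorem differentiable (h : PowSumEntire a d) : Differentiable ℝ (powSum a d) :=
  fun x => (h.hasDerivAt x).differentiableAt

theorem mul_deriv (h : PowSumEntire a d) (x : ℝ) :
    x * deriv (powSum a d) x = powSum (eulerCoeff a d) d x := by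
  rw [(h.hasDerivAt x).deriv, powSum, powSum, ← tsum_mul_left]
  congr 1 with m
  rcases Nat.eq_zero_or_pos (d m) with hm | hm
  · simp [eulerCoeff, hm]
  · rw [mul_left_comm, ← pow_succ', Nat.sub_add_cancel hm]

end PowSumEntire

theorem powSum_eulerCoeff_zero (a : ℕ → ℝ) (d : ℕ → ℕ) : powSum (eulerCoeff a d) d 0 = 0 := by
  rw [powSum]
  refine (tsum_congr fun m => ?_).trans tsum_zero
  rcases Nat.eq_zero_or_pos (d m) with hm | hm
  · simp [eulerCoeff, hm]
  · simp [hm.ne']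

def besselCoeff (k m : ℕ) : ℝ := 1 / (2 ^ (2 * m + k) * m ! * (m + k)!)

def besselExp (k m : ℕ) : ℕ := 2 * m + k

theorem besselCoeff_pos (k m : ℕ) : 0 < besselCoeff k m := by
  unfold besselCoeff; positivity

theorem besselCoeff_eq_mul_succ (k m : ℕ) :
    besselCoeff k m = 4 * (m + 1) * (m + 1 + k) * besselCoeff k (m + 1) := by
  have hfac : ((m + 1 + k)! : ℝ) = (m + k + 1) * (m + k)! := by
    rw [show m + 1 + k = m + k + 1 by omega, Nat.factorial_succ]; push_cast; ring
  simp only [besselCoeff, hfac, Nat.factorial_succ, show 2 * (m + 1) + k = 2 * m + k + 2 by omega,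
    pow_add]
  push_cast
  field_simp
  ring

theorem powSumEntire_besselCoeff (k : ℕ) : PowSumEntire (besselCoeff k) (besselExp k) := fun x => by
  refine ((Real.summable_pow_div_factorial ((x / 2) ^ 2)).mul_left (|x / 2| ^ k)).of_nonneg_of_le
    (fun _ => norm_nonneg _) fun m => ?_
  have hfac : (1 : ℝ) ≤ (m + k)! := by exact_mod_cast (m + k).factorial_pos
  rw [norm_mul, norm_pow, Real.norm_eq_abs, Real.norm_eq_abs, abs_of_pos (besselCoeff_pos k m),
    besselCoeff, besselExp]
  calc 1 / (2 ^ (2 * m + k) * m ! * (m + k)!) * |x| ^ (2 * m + k)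
      = |x / 2| ^ (2 * m + k) / m ! / (m + k)! := by
        rw [abs_div, abs_two, div_pow]; field_simp
    _ ≤ |x / 2| ^ (2 * m + k) / m ! := div_le_self (by positivity) hfac
    _ = |x / 2| ^ k * (((x / 2) ^ 2) ^ m / m !) := by
        rw [← sq_abs, ← pow_mul, mul_div_assoc', ← pow_add, add_comm]

def besselSeries (k : ℕ) : ℝ → ℝ := powSum (besselCoeff k) (besselExp k)

def besselEuler (k : ℕ) : ℝ → ℝ := powSum (eulerCoeff (besselCoeff k) (besselExp k)) (besselExp k)

theorem besselI_eq_besselSeries (k : ℕ) {z : ℝ} (hz : 0 < z) : besselI k z = besselSeries k z := by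
  refine tsum_congr fun m => ?_
  rw [show 2 * (m : ℝ) + k = ((2 * m + k : ℕ) : ℝ) by push_cast; ring, Real.rpow_natCast,
    show (m : ℝ) + k + 1 = ((m + k : ℕ) : ℝ) + 1 by push_cast; ring, Real.Gamma_nat_eq_factorial,
    besselCoeff, besselExp, div_pow]
  field_simp

theorem besselSeries_pos (k : ℕ) {z : ℝ} (hz : 0 < z) : 0 < besselSeries k z :=
  (powSumEntire_besselCoeff k).summable z |>.tsum_pos
    (fun m => mul_nonneg (besselCoeff_pos k m).le (pow_nonneg hz.le _)) 0
    (mul_pos (besselCoeff_pos k 0) (pow_pos hz _))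

theorem differentiable_besselSeries (k : ℕ) : Differentiable ℝ (besselSeries k) :=
  (powSumEntire_besselCoeff k).differentiable

theorem differentiable_besselEuler (k : ℕ) : Differentiable ℝ (besselEuler k) :=
  (powSumEntire_besselCoeff k).euler.differentiable

theorem mul_deriv_besselSeries (k : ℕ) (z : ℝ) :
    z * deriv (besselSeries k) z = besselEuler k z :=
  (powSumEntire_besselCoeff k).mul_deriv z

theorem mul_deriv_besselEuler (k : ℕ) (z : ℝ) :
    z * deriv (besselEuler k) z = (z ^ 2 + k ^ 2) * besselSeries k z := by
  rw [besselEuler, (powSumEntire_besselCoeff k).euler.mul_deriv]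
  set f : ℕ → ℝ := fun m => besselCoeff k m * z ^ besselExp k m
  set g : ℕ → ℝ := fun m => 4 * m * (m + k) * f m
  have hshift : ∀ m, g (m + 1) = z ^ 2 * f m := fun m => by
    simp only [g, f, besselCoeff_eq_mul_succ k m, besselExp]
    push_cast; ring
  have hf : Summable f := (powSumEntire_besselCoeff k).summable z
  have hg : Summable g :=
    (summable_nat_add_iff 1).mp ((hf.mul_left (z ^ 2)).congr fun m => (hshift m).symm)
  have hg_tsum : ∑' m, g m = z ^ 2 * ∑' m, f m := by
    rw [hg.tsum_eq_zero_add, tsum_congr hshift, tsum_mul_left]; simp [g]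
  have hsplit : ∀ m, eulerCoeff (eulerCoeff (besselCoeff k) (besselExp k)) (besselExp k) m *
      z ^ besselExp k m = k ^ 2 * f m + g m := fun m => by
    simp only [eulerCoeff, f, g, besselExp]; push_cast; ring
  rw [powSum, tsum_congr hsplit, (hf.mul_left _).tsum_add hg, tsum_mul_left, hg_tsum,
    besselSeries, powSum]
  ring

def besselDisc (k : ℕ) (z : ℝ) : ℝ := (z ^ 2 + k ^ 2) * besselSeries k z ^ 2 - besselEuler k z ^ 2

theorem continuous_besselDisc (k : ℕ) : Continuous (besselDisc k) := by
  have := (differentiable_besselSeries k).continuous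
  have := (differentiable_besselEuler k).continuous
  unfold besselDisc; fun_prop

theorem hasDerivAt_besselDisc (k : ℕ) {z : ℝ} (hz : z ≠ 0) :
    HasDerivAt (besselDisc k) (2 * z * besselSeries k z ^ 2) z := by
  have hF := (differentiable_besselSeries k z).hasDerivAt
  have hE := (differentiable_besselEuler k z).hasDerivAt
  refine ((((hasDerivAt_pow 2 z).add_const ((k : ℝ) ^ 2)).mul (hF.fun_pow 2)).sub
    (hE.fun_pow 2)).congr_deriv (mul_left_cancel₀ hz ?_)
  linear_combination (2 * (z ^ 2 + k ^ 2) * besselSeries k z) * mul_deriv_besselSeries k z -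
    (2 * besselEuler k z) * mul_deriv_besselEuler k z

theorem besselDisc_zero (k : ℕ) : besselDisc k 0 = 0 := by
  have hE : besselEuler k 0 = 0 := powSum_eulerCoeff_zero _ _
  have hF : (k : ℝ) ^ 2 * besselSeries k 0 = 0 := by simpa using (mul_deriv_besselEuler k 0).symm
  simp only [besselDisc, hE]
  linear_combination besselSeries k 0 * hF

theorem besselDisc_pos (k : ℕ) {z : ℝ} (hz : 0 < z) : 0 < besselDisc k z := by
  have hmono : StrictMonoOn (besselDisc k) (Ici 0) := by
    refine strictMonoOn_of_deriv_pos (convex_Ici 0) (continuous_besselDisc k).continuousOn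
      fun x hx => ?_
    replace hx : 0 < x := by rwa [interior_Ici] at hx
    rw [(hasDerivAt_besselDisc k hx.ne').deriv]
    have := besselSeries_pos k hx
    positivity
  simpa [besselDisc_zero] using hmono self_mem_Ici hz.le hz

theorem hasDerivAt_besselRatio (k : ℕ) {z : ℝ} (hz : 0 < z) :
    HasDerivAt (fun w => w * deriv (besselI k) w / besselI k w)
      (besselDisc k z / (z * besselSeries k z ^ 2)) z := by
  have hF := (differentiable_besselSeries k z).hasDerivAt
  have hE := (differentiable_besselEuler k z).hasDerivAt
  have hFz := besselSeries_pos k hz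
  have hratio : (fun w => w * deriv (besselI k) w / besselI k w) =ᶠ[𝓝 z]
      fun w => besselEuler k w / besselSeries k w := by
    filter_upwards [Ioi_mem_nhds hz] with w hw
    have hI : besselI k =ᶠ[𝓝 w] besselSeries k :=
      eventually_of_mem (Ioi_mem_nhds hw) fun v hv => besselI_eq_besselSeries k hv
    rw [hI.deriv_eq, mul_deriv_besselSeries, besselI_eq_besselSeries k hw]
  refine ((hE.div hF hFz.ne').congr_deriv ?_).congr_of_eventuallyEq hratio
  rw [div_eq_div_iff (by positivity) (by positivity), besselDisc]
  linear_combination (besselSeries k z ^ 2 * besselSeries k z) * mul_deriv_besselEuler k z -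
    (besselSeries k z ^ 2 * besselEuler k z) * mul_deriv_besselSeries k z

end

/-- For every integer `k ≥ 0`, the function `G_k(z) = z·I_k'(z)/I_k(z)` has positive
derivative on `(0,∞)`; in particular it is strictly increasing there. -/
theorem stmt3 (k : ℕ) :
    (∀ z ∈ Set.Ioi (0 : ℝ),
      0 < deriv (fun z : ℝ => z * deriv (besselI k) z / besselI k z) z) ∧
    StrictMonoOn (fun z : ℝ => z * deriv (besselI k) z / besselI k z) (Set.Ioi 0) := by
  have hpos : ∀ z ∈ Set.Ioi (0 : ℝ),
      0 < deriv (fun z : ℝ => z * deriv (besselI k) z / besselI k z) z := fun z (hz : 0 < z) => by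
    rw [(hasDerivAt_besselRatio k hz).deriv]
    have := besselDisc_pos k hz
    have := besselSeries_pos k hz
    positivity
  refine ⟨hpos, strictMonoOn_of_deriv_pos (convex_Ioi 0) (fun z hz => ?_) (by simpa using hpos)⟩
  exact (hasDerivAt_besselRatio k hz).continuousAt.continuousWithinAt
end

section
/- Let a > 0 and f : [0,1] → ℝ continuous with f(r) < 0 for all r ∈ (0,1). Suppose v ∈ C²((0,1)) ∩ C([0,1]) satisfies −(r·v'(r))' + r·(1/r² + a²)·v(r) = r·f(r) on (0,1) with v(0) = 0 and v(1) = 0. Then v(r) < 0 for all r ∈ (0,1). -/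
/-!
If `v` were nonnegative somewhere in `(0, 1)`, then, since `v` vanishes at both endpoints, its
maximum over `[0, 1]` would be attained at some `c ∈ (0, 1)` with `v c ≥ 0`. There `v' c = 0` and
`v'' c ≤ 0`, so `-(r v')' = -v' - r v''` is `≥ 0` at `c`; the left-hand side of the equation is then
`≥ 0`, while `c f(c) < 0`.
-/

open Real Filter Set Topology

theorem IsLocalMax.deriv_deriv_nonpos {f : ℝ → ℝ} {x : ℝ} (hmax : IsLocalMax f x)
    (hcont : ContinuousAt f x) : deriv (deriv f) x ≤ 0 := by
  by_contra! hpos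
  -- The second-derivative test makes `x` also a local minimum, so `f` is locally constant.
  have hmin : IsLocalMin f x := isLocalMin_of_deriv_deriv_pos hpos hmax.deriv_eq_zero hcont
  have hconst : f =ᶠ[𝓝 x] fun _ ↦ f x := by
    filter_upwards [hmin, hmax] with y hy_ge hy_le using le_antisymm hy_le hy_ge
  have hzero : deriv (deriv f) x = 0 := by
    rw [hconst.deriv.deriv_eq]
    simp
  exact hpos.ne' hzero

theorem deriv_mul_deriv_nonpos_of_isLocalMax {v : ℝ → ℝ} {r : ℝ} (hr : 0 ≤ r)
    (hmax : IsLocalMax v r) (hcont : ContinuousAt v r) (hdiff : DifferentiableAt ℝ (deriv v) r) :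
    deriv (fun s ↦ s * deriv v s) r ≤ 0 := by
  have hprod : deriv (fun s ↦ s * deriv v s) r = deriv v r + r * deriv (deriv v) r := by
    rw [deriv_fun_mul differentiableAt_fun_id hdiff, deriv_id'']
    ring
  rw [hprod, hmax.deriv_eq_zero, zero_add]
  exact mul_nonpos_of_nonneg_of_nonpos hr (hmax.deriv_deriv_nonpos hcont)

theorem radial_operator_nonneg_of_isLocalMax {v : ℝ → ℝ} {a r : ℝ} (hr : 0 ≤ r)
    (hmax : IsLocalMax v r) (hcont : ContinuousAt v r) (hdiff : DifferentiableAt ℝ (deriv v) r)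
    (hvr : 0 ≤ v r) :
    0 ≤ -(deriv (fun s ↦ s * deriv v s) r) + r * (1 / r ^ 2 + a ^ 2) * v r := by
  have hflux := deriv_mul_deriv_nonpos_of_isLocalMax hr hmax hcont hdiff
  have hzeroth : 0 ≤ r * (1 / r ^ 2 + a ^ 2) * v r := by positivity
  linarith

theorem stmt17_general (a : ℝ) (f v : ℝ → ℝ)
    (hfneg : ∀ r ∈ Set.Ioo (0 : ℝ) 1, f r < 0)
    (hv : ContinuousOn v (Set.Icc 0 1)) (hv2 : ContDiffOn ℝ 2 v (Set.Ioo 0 1))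
    (heq : ∀ r ∈ Set.Ioo (0 : ℝ) 1,
      -(deriv (fun s : ℝ => s * deriv v s) r) + r * (1 / r ^ 2 + a ^ 2) * v r = r * f r)
    (h0 : v 0 = 0) (h1 : v 1 = 0) :
    ∀ r ∈ Set.Ioo (0 : ℝ) 1, v r < 0 := by
  have hv1 : ContDiffOn ℝ 1 (deriv v) (Ioo 0 1) := hv2.deriv_of_isOpen isOpen_Ioo (by norm_num)
  have interior_max_neg : ∀ r ∈ Ioo (0 : ℝ) 1, IsMaxOn v (Icc 0 1) r → v r < 0 := by
    intro r hr hmax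
    by_contra! hvr
    have hnhds : Icc (0 : ℝ) 1 ∈ 𝓝 r := Icc_mem_nhds hr.1 hr.2
    have hdiff : DifferentiableAt ℝ (deriv v) r :=
      (hv1.differentiableOn one_ne_zero r hr).differentiableAt (Ioo_mem_nhds hr.1 hr.2)
    have hlhs := radial_operator_nonneg_of_isLocalMax (a := a) hr.1.le (hmax.isLocalMax hnhds)
      (hv.continuousAt hnhds) hdiff hvr
    linarith [heq r hr, mul_neg_of_pos_of_neg hr.1 (hfneg r hr)]
  obtain ⟨c, hc, hcmax⟩ := isCompact_Icc.exists_isMaxOn (nonempty_Icc.2 zero_le_one) hv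
  have hvc : v c ≤ 0 := by
    rcases eq_endpoints_or_mem_Ioo_of_mem_Icc hc with rfl | rfl | hc'
    · exact h0.le
    · exact h1.le
    · exact (interior_max_neg c hc' hcmax).le
  intro r hr
  by_contra! hvr
  exact (interior_max_neg r hr fun x hx ↦ (hcmax hx).trans (hvc.trans hvr)).not_ge hvr

/-- One-dimensional maximum principle: if `a > 0`, `f` is continuous on `[0,1]` and
negative on `(0,1)`, and `v ∈ C²((0,1)) ∩ C([0,1])` satisfies
`−(r v')' + r(1/r² + a²) v = r f` on `(0,1)` with `v(0) = v(1) = 0`,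
then `v < 0` on `(0,1)`. -/
theorem stmt17 (a : ℝ) (ha : 0 < a) (f v : ℝ → ℝ)
    (hf : ContinuousOn f (Set.Icc 0 1)) (hfneg : ∀ r ∈ Set.Ioo (0 : ℝ) 1, f r < 0)
    (hv : ContinuousOn v (Set.Icc 0 1)) (hv2 : ContDiffOn ℝ 2 v (Set.Ioo 0 1))
    (heq : ∀ r ∈ Set.Ioo (0 : ℝ) 1,
      -(deriv (fun s : ℝ => s * deriv v s) r) + r * (1 / r ^ 2 + a ^ 2) * v r = r * f r)
    (h0 : v 0 = 0) (h1 : v 1 = 0) :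
    ∀ r ∈ Set.Ioo (0 : ℝ) 1, v r < 0 :=
  stmt17_general a f v hfneg hv hv2 heq h0 h1
end
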